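/- arXiv:1302.3613 — 2 statements merged into one kernel-verified Lean document; each statement's English description precedes it below -/
import Mathlib

section
/- For every natural number n, γ = (-1)^(n+1) · n! · (lim_{x→0} [(-1)^(n+1)/(n! x) + Γ(-n + x)]) + H_n. -/
/-!
The function `R n x = Γ(-n + x) + (-1)^(n+1) / (n! x)` is `Γ` near `-n` with its simple pole removed.
For `n = 0`, `R 0 x = (Γ(1 + x) - Γ(1)) / x` tends to `Γ'(1) = -γ`. The functional equation
`Γ(s) = Γ(s + 1) / s` turns `R (n+1) x` into `(R n x + (-1)^n / (n+1)!) / (x - (n+1))`, so by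
induction `R n x` tends to `(-1)^n (H_n - γ) / n!`.
-/

open Real Filter Topology Nat

local notation "γ" => Real.eulerMascheroniConstant

namespace Real

noncomputable def gammaRegularPart (n : ℕ) (x : ℝ) : ℝ :=
  (-1) ^ (n + 1) / (n ! * x) + Gamma (-(n : ℝ) + x)

lemma tendsto_Gamma_sub_inv_nhdsNE_zero :
    Tendsto (fun x : ℝ => Gamma x - x⁻¹) (𝓝[≠] 0) (𝓝 (-γ)) := by
  have hderiv : HasDerivAt (fun x => Gamma (x + 1)) (-γ) 0 :=
    (zero_add (1 : ℝ) ▸ hasDerivAt_Gamma_one).comp_add_const 0 1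
  refine (hasDerivAt_iff_tendsto_slope.mp hderiv).congr' ?_
  filter_upwards [self_mem_nhdsWithin] with x (hx : x ≠ 0)
  rw [slope_def_field, sub_zero, zero_add, Gamma_one, Gamma_add_one hx]
  field_simp

lemma gammaRegularPart_succ {n : ℕ} {x : ℝ} (hx : x ≠ 0) (hxn : x ≠ n + 1) :
    gammaRegularPart (n + 1) x =
      (gammaRegularPart n x + (-1) ^ n / (n + 1)!) / (x - (n + 1)) := by
  have hs : -((n + 1 : ℕ) : ℝ) + x ≠ 0 := by
    push_cast
    intro h
    exact hxn (by linarith)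
  have hrec := Gamma_add_one hs
  rw [show -((n + 1 : ℕ) : ℝ) + x + 1 = -(n : ℝ) + x by push_cast; ring] at hrec
  rw [eq_div_iff (sub_ne_zero.mpr hxn), gammaRegularPart, gammaRegularPart, hrec]
  push_cast [factorial_succ, pow_succ]
  field_simp
  ring

lemma tendsto_gammaRegularPart (n : ℕ) :
    Tendsto (gammaRegularPart n) (𝓝[≠] 0) (𝓝 ((-1) ^ n * (harmonic n - γ) / n !)) := by
  induction n with
  | zero =>
    convert tendsto_Gamma_sub_inv_nhdsNE_zero using 2 with x
    · simp [gammaRegularPart, neg_div, sub_eq_neg_add]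
    · simp
  | succ n ih =>
    have hn : (0 : ℝ) < n + 1 := by positivity
    have hlim := (ih.add_const ((-1) ^ n / (n + 1)! : ℝ)).div
      ((tendsto_id.sub_const ((n : ℝ) + 1)).mono_left nhdsWithin_le_nhds)
      (by simp only [zero_sub, neg_ne_zero]; exact hn.ne')
    have hval : ((-1) ^ n * (harmonic n - γ) / n ! + (-1) ^ n / (n + 1)! : ℝ) / (0 - (n + 1)) =
        (-1) ^ (n + 1) * (harmonic (n + 1) - γ) / (n + 1)! := by
      rw [zero_sub, div_neg]
      push_cast [harmonic_succ, factorial_succ, pow_succ]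
      field_simp
      ring
    rw [hval] at hlim
    refine hlim.congr' ?_
    filter_upwards [self_mem_nhdsWithin, nhdsWithin_le_nhds (eventually_ne_nhds hn.ne)]
      with x (hx : x ≠ 0) hxn
    exact (gammaRegularPart_succ hx hxn).symm

end Real

theorem stmt_5 (n : ℕ) :
    Real.eulerMascheroniConstant =
      (-1) ^ (n + 1) * (n.factorial : ℝ) *
        Filter.limUnder (nhdsWithin 0 {0}ᶜ)
          (fun x : ℝ => (-1) ^ (n + 1) / (n.factorial * x) + Real.Gamma (-(n : ℝ) + x)) +
      (harmonic n : ℝ) := by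
  have hsign : ((-1 : ℝ) ^ n) ^ 2 = 1 := by
    rw [← pow_mul, mul_comm, pow_mul, neg_one_sq, one_pow]
  change _ = _ * _ * limUnder _ (gammaRegularPart n) + _
  rw [(tendsto_gammaRegularPart n).limUnder_eq]
  field_simp
  linear_combination (harmonic n - γ : ℝ) * hsign
end

section
/- For every natural number n ≥ 1, γ = (-1)^(n+1) · ((n! + (-1)^(n+1))/2) · lim_{x→0} [1/x + (1/x - Γ(-n+x))/(-1 - x·Γ(-n-x))] + H_n. -/
/-!
Write `P_n(x) = (x - 1)(x - 2) ⋯ (x - n)` and `G(x) = Γ(x + 1)`. The functional equation gives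
`G(x) = x P_n(x) Γ(x - n)`, which turns the expression under the limit into
`(P_n(x) G(-x) - P_n(-x) G(x)) / x` divided by `P_n(x) (G(-x) - P_n(-x))`.
The first factor is the difference quotient at `0` of a function vanishing there, so it tends to
`2 (P_n'(0) G(0) - P_n(0) G'(0))`. With `G'(0) = -γ`, `P_n(0) = (-1)^n n!` and
`P_n'(0) = -P_n(0) H_n`, the limit is `2 (γ - H_n) / (1 - (-1)^n n!)`.
-/

open Real Filter Topology

noncomputable def prodSubSucc (n : ℕ) (x : ℝ) : ℝ := ∏ k ∈ Finset.range n, (x - (k + 1))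

lemma prodSubSucc_zero (x : ℝ) : prodSubSucc 0 x = 1 := by simp [prodSubSucc]

lemma prodSubSucc_succ (n : ℕ) (x : ℝ) :
    prodSubSucc (n + 1) x = prodSubSucc n x * (x - (n + 1)) :=
  Finset.prod_range_succ _ _

lemma prodSubSucc_ne_zero (n : ℕ) {x : ℝ} (hx : x < 1) : prodSubSucc n x ≠ 0 :=
  Finset.prod_ne_zero_iff.mpr fun k _ => sub_ne_zero.mpr (by
    have : (0 : ℝ) ≤ k := k.cast_nonneg
    linarith)

lemma prodSubSucc_apply_zero (n : ℕ) : prodSubSucc n 0 = (-1) ^ n * n.factorial := by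
  simp only [prodSubSucc, zero_sub, Finset.prod_neg, Finset.card_range]
  exact_mod_cast congrArg (fun m : ℕ => (-1 : ℝ) ^ n * m) (Finset.prod_range_add_one_eq_factorial n)

lemma hasDerivAt_prodSubSucc_zero (n : ℕ) :
    HasDerivAt (prodSubSucc n) (-prodSubSucc n 0 * harmonic n) 0 := by
  induction n with
  | zero =>
    rw [show prodSubSucc 0 = fun _ => 1 from funext prodSubSucc_zero]
    simpa using hasDerivAt_const (0 : ℝ) (1 : ℝ)
  | succ m ih =>
    have hprod := ih.mul ((hasDerivAt_id (0 : ℝ)).sub_const ((m : ℝ) + 1))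
    rw [show prodSubSucc (m + 1) = fun x => prodSubSucc m x * (x - (m + 1)) from
      funext (prodSubSucc_succ m)]
    refine hprod.congr_deriv ?_
    simp only [id, harmonic_succ, zero_sub]
    push_cast
    field_simp

lemma Gamma_add_one_eq_mul_prodSubSucc (n : ℕ) {x : ℝ} (hx : ∀ k : ℕ, k ≤ n → x ≠ k) :
    Gamma (x + 1) = x * prodSubSucc n x * Gamma (x - n) := by
  induction n with
  | zero => simpa [prodSubSucc_zero] using Gamma_add_one (by exact_mod_cast hx 0 le_rfl)
  | succ m ih =>
    have hsucc : x - (m + 1 : ℕ) ≠ 0 := sub_ne_zero.mpr (hx (m + 1) le_rfl)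
    have hstep := Gamma_add_one hsucc
    rw [ih fun k hk => hx k (by omega), prodSubSucc_succ,
      show x - m = x - (m + 1 : ℕ) + 1 by push_cast; ring, hstep]
    push_cast
    ring

lemma tendsto_antisymm_div {𝕜 : Type*} [NontriviallyNormedField 𝕜] {f g : 𝕜 → 𝕜} {f' g' : 𝕜}
    (hf : HasDerivAt f f' 0) (hg : HasDerivAt g g' 0) :
    Tendsto (fun x => (f x * g (-x) - f (-x) * g x) / x) (𝓝[≠] 0)
      (𝓝 (2 * (f' * g 0 - f 0 * g'))) := by
  have hf_neg : HasDerivAt (fun x => f (-x)) (-f') 0 := by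
    simpa using HasDerivAt.comp_const_sub (0 : 𝕜) 0 (by rwa [sub_zero])
  have hg_neg : HasDerivAt (fun x => g (-x)) (-g') 0 := by
    simpa using HasDerivAt.comp_const_sub (0 : 𝕜) 0 (by rwa [sub_zero])
  have hderiv := (hf.mul hg_neg).sub (hf_neg.mul hg)
  refine (hasDerivAt_iff_tendsto_slope.mp hderiv).congr' ?_ |>.trans_eq ?_
  · filter_upwards with x
    simp [slope_def_field]
  · rw [neg_zero]
    congr 1
    ring

lemma one_sub_neg_one_pow_mul_factorial_ne_zero {n : ℕ} (hn : 1 ≤ n) :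
    1 - (-1 : ℝ) ^ n * n.factorial ≠ 0 := by
  rcases Nat.even_or_odd n with he | ho
  · have h2 : 2 ≤ n := by rcases he with ⟨k, hk⟩; omega
    have : (2 : ℝ) ≤ n.factorial := by exact_mod_cast h2.trans (Nat.self_le_factorial n)
    rw [he.neg_one_pow]
    linarith
  · have : (0 : ℝ) < n.factorial := by positivity
    rw [ho.neg_one_pow]
    linarith

lemma Gamma_neg_nat_quotient_eq (n : ℕ) {x : ℝ} (hx0 : x ≠ 0) (hx : x ∈ Set.Ioo (-1) 1)
    (hD : Gamma (-x + 1) - prodSubSucc n (-x) ≠ 0) :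
    1 / x + (1 / x - Gamma (-n + x)) / (-1 - x * Gamma (-n - x)) =
      (prodSubSucc n x * Gamma (-x + 1) - prodSubSucc n (-x) * Gamma (x + 1)) / x /
        (prodSubSucc n x * (Gamma (-x + 1) - prodSubSucc n (-x))) := by
  obtain ⟨hx_lo, hx_hi⟩ := hx
  have hpoles : ∀ y : ℝ, y ≠ 0 → y < 1 → ∀ k : ℕ, k ≤ n → y ≠ k := by
    rintro y hy0 hy1 (_ | k) -
    · exact_mod_cast hy0
    · push_cast
      linarith [(k.cast_nonneg : (0 : ℝ) ≤ k)]
  have hGx : Gamma (x + 1) = x * prodSubSucc n x * Gamma (-n + x) := by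
    rw [show -(n : ℝ) + x = x - n by ring]
    exact Gamma_add_one_eq_mul_prodSubSucc n (hpoles x hx0 hx_hi)
  have hGnx : Gamma (-x + 1) = -x * prodSubSucc n (-x) * Gamma (-n - x) := by
    rw [show -(n : ℝ) - x = -x - n by ring]
    exact Gamma_add_one_eq_mul_prodSubSucc n (hpoles (-x) (neg_ne_zero.mpr hx0) (by linarith))
  have hPx := prodSubSucc_ne_zero n hx_hi
  have hPnx := prodSubSucc_ne_zero n (show -x < 1 by linarith)
  rw [hGnx] at hD
  rw [hGx, hGnx]
  generalize Gamma (-n + x) = a, Gamma (-n - x) = b at hD ⊢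
  have hb : 1 + x * b ≠ 0 := by
    contrapose! hD
    linear_combination -prodSubSucc n (-x) * hD
  trans (a + b) / (1 + x * b)
  · rw [show -1 - x * b = -(1 + x * b) by ring, div_neg, ← sub_eq_add_neg,
      div_sub_div _ _ hx0 hb, div_eq_div_iff (mul_ne_zero hx0 hb) hb]
    field_simp
    ring
  · rw [show prodSubSucc n x * (-x * prodSubSucc n (-x) * b) -
        prodSubSucc n (-x) * (x * prodSubSucc n x * a) =
        x * (-(prodSubSucc n x * prodSubSucc n (-x)) * (a + b)) by ring,
      show prodSubSucc n x * (-x * prodSubSucc n (-x) * b - prodSubSucc n (-x)) =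
        -(prodSubSucc n x * prodSubSucc n (-x)) * (1 + x * b) by ring,
      mul_div_cancel_left₀ _ hx0, mul_div_mul_left _ _ (neg_ne_zero.mpr (mul_ne_zero hPx hPnx))]

lemma tendsto_Gamma_neg_nat_quotient (n : ℕ) (hn : 1 ≤ n) :
    Tendsto (fun x : ℝ => 1 / x +
        (1 / x - Gamma (-(n : ℝ) + x)) / (-1 - x * Gamma (-(n : ℝ) - x)))
      (𝓝[≠] 0)
      (𝓝 (2 * (eulerMascheroniConstant - harmonic n) / (1 - (-1) ^ n * n.factorial))) := by
  have hG : HasDerivAt (fun x : ℝ => Gamma (x + 1)) (-eulerMascheroniConstant) 0 :=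
    HasDerivAt.comp_add_const 0 1 (by simpa using hasDerivAt_Gamma_one)
  have hP := hasDerivAt_prodSubSucc_zero n
  have hc : prodSubSucc n 0 = (-1) ^ n * n.factorial := prodSubSucc_apply_zero n
  have hc0 : prodSubSucc n 0 ≠ 0 := prodSubSucc_ne_zero n one_pos
  have h1c : 1 - prodSubSucc n 0 ≠ 0 := hc ▸ one_sub_neg_one_pow_mul_factorial_ne_zero hn
  set D : ℝ → ℝ := fun x => prodSubSucc n x * (Gamma (-x + 1) - prodSubSucc n (-x))
  have hD : Tendsto D (𝓝[≠] 0) (𝓝 (prodSubSucc n 0 * (1 - prodSubSucc n 0))) := by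
    have hcont : ContinuousAt D 0 :=
      hP.continuousAt.mul ((hG.continuousAt.comp_of_eq continuous_neg.continuousAt neg_zero).sub
        (hP.continuousAt.comp_of_eq continuous_neg.continuousAt neg_zero))
    simpa [D] using hcont.tendsto.mono_left nhdsWithin_le_nhds
  have hsmall : ∀ᶠ x in 𝓝[≠] (0 : ℝ), x ∈ Set.Ioo (-1) 1 :=
    nhdsWithin_le_nhds (Ioo_mem_nhds (by norm_num) (by norm_num))
  refine (((tendsto_antisymm_div hP hG).div hD (mul_ne_zero hc0 h1c)).congr' ?_).trans_eq ?_
  · filter_upwards [hD.eventually_ne (mul_ne_zero hc0 h1c), hsmall, self_mem_nhdsWithin]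
      with x hDx hx hx0
    exact (Gamma_neg_nat_quotient_eq n hx0 hx (right_ne_zero_of_mul hDx)).symm
  · rw [hc] at hc0 h1c ⊢
    rw [zero_add, Gamma_one]
    congr 1
    field_simp
    ring

theorem stmt_12 (n : ℕ) (hn : 1 ≤ n) :
    Real.eulerMascheroniConstant =
      (-1) ^ (n + 1) * (((n.factorial : ℝ) + (-1) ^ (n + 1)) / 2) *
        Filter.limUnder (nhdsWithin 0 {0}ᶜ)
          (fun x : ℝ => 1 / x +
            (1 / x - Real.Gamma (-(n : ℝ) + x)) / (-1 - x * Real.Gamma (-(n : ℝ) - x))) +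
      (harmonic n : ℝ) := by
  have h1c := one_sub_neg_one_pow_mul_factorial_ne_zero hn
  have hsq : ((-1 : ℝ) ^ n) ^ 2 = 1 := by rw [← pow_mul, mul_comm, pow_mul, neg_one_sq, one_pow]
  rw [(tendsto_Gamma_neg_nat_quotient n hn).limUnder_eq,
    show (-1 : ℝ) ^ (n + 1) * ((n.factorial + (-1) ^ (n + 1)) / 2) =
      (1 - (-1) ^ n * n.factorial) / 2 by linear_combination hsq / 2]
  field_simp
  ring
end
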